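/- For any a ≥ 2 and any integer h with 0 ≤ h ≤ a, we have Λ(a,h) ≤ Λ(a) − (a−h); moreover if a/2 ≤ h ≤ a then equality holds, i.e. Λ(a,h) = Λ(a) − (a−h). -/

import Mathlib

/-- `U` induces a disjoint union of chains such that any two elements belonging to different
chains are incomparable; equivalently, comparability restricted to `U` is transitive
(so the comparability graph induced on `U` is a vertex-disjoint union of cliques). -/
def IsChainUnion {α : Type*} [PartialOrder α] (U : Finset α) : Prop :=
  ∀ x ∈ U, ∀ y ∈ U, ∀ z ∈ U,
    (x ≤ y ∨ y ≤ x) → (y ≤ z ∨ z ≤ y) → (x ≤ z ∨ z ≤ x)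

/-- `ao α`: the maximum cardinality of a subset of the finite poset `α` that is a
disjoint union of chains with elements of different chains incomparable. -/
noncomputable def ao (α : Type*) [Fintype α] [PartialOrder α] : ℕ :=
  sSup {m | ∃ U : Finset α, IsChainUnion U ∧ U.card = m}

/-- The height of a finite poset: the maximum size of a chain. -/
noncomputable def heightP (α : Type*) [Fintype α] [PartialOrder α] : ℕ :=
  sSup {m | ∃ C : Finset α, IsChain (· ≤ ·) (↑C : Set α) ∧ C.card = m}

/-- The width of a finite poset: the maximum size of an antichain. -/
noncomputable def widthP (α : Type*) [Fintype α] [PartialOrder α] : ℕ :=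
  sSup {m | ∃ A : Finset α, IsAntichain (· ≤ ·) (↑A : Set α) ∧ A.card = m}

/-- The cover graph of a poset: `x` and `y` are adjacent iff one covers the other. -/
def coverGraph (α : Type*) [PartialOrder α] : SimpleGraph α where
  Adj x y := x ⋖ y ∨ y ⋖ x
  symm := ⟨fun x y h => h.symm⟩
  loopless := ⟨fun x h => by rcases h with h | h <;> exact absurd h.lt (lt_irrefl x)⟩

/-- A poset is acyclic if its cover graph has no cycles. -/
def AcyclicPoset (α : Type*) [PartialOrder α] : Prop := (coverGraph α).IsAcyclic

/-- A poset is connected if its cover graph is connected. -/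
def ConnectedPoset (α : Type*) [PartialOrder α] : Prop := (coverGraph α).Connected

/-- A poset is `N`-free if there are no `p1, p2, p3, p4` with `p1 > p3`, `p1 > p4`, `p2 > p4`,
`p1 ∦ p2`, `p2 ∦ p3`, `p3 ∦ p4`. -/
def NFree (α : Type*) [PartialOrder α] : Prop :=
  ¬ ∃ p1 p2 p3 p4 : α, p3 < p1 ∧ p4 < p1 ∧ p4 < p2 ∧
      ¬(p1 ≤ p2 ∨ p2 ≤ p1) ∧ ¬(p2 ≤ p3 ∨ p3 ≤ p2) ∧ ¬(p3 ≤ p4 ∨ p4 ≤ p3)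

/-- A poset is `V`-free if there are no `p1 < p2`, `p1 < p3` with `p2` incomparable to `p3`. -/
def VFree (α : Type*) [PartialOrder α] : Prop :=
  ¬ ∃ p1 p2 p3 : α, p1 < p2 ∧ p1 < p3 ∧ ¬(p2 ≤ p3 ∨ p3 ≤ p2)

/-- `ao` of the family `T_n` of all acyclic posets on `n` elements:
the minimum of `ao P` over acyclic posets `P` of size `n`. -/
noncomputable def aoT (n : ℕ) : ℕ :=
  sInf {m | ∃ P : PartialOrder (Fin n),
    @AcyclicPoset (Fin n) P ∧ @ao (Fin n) (Fin.fintype n) P = m}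

/-- `Λ(a, h)`: the maximum cardinality of a `V`-free poset `P` with `ao P = a` and
height at most `h`. -/
noncomputable def Lam (a h : ℕ) : ℕ :=
  sSup {n | ∃ P : PartialOrder (Fin n), @VFree (Fin n) P ∧
    @ao (Fin n) (Fin.fintype n) P = a ∧ @heightP (Fin n) (Fin.fintype n) P ≤ h}

/-- `Λ(a) = Λ(a, a)`. -/
noncomputable def Lambda (a : ℕ) : ℕ := Lam a a

/-- `X(a)`: the maximum cardinality of an acyclic and `N`-free poset `P` with `ao P = a`. -/
noncomputable def Xmax (a : ℕ) : ℕ :=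
  sSup {n | ∃ P : PartialOrder (Fin n), @AcyclicPoset (Fin n) P ∧
    @NFree (Fin n) P ∧ @ao (Fin n) (Fin.fintype n) P = a}

/-!
A new top element keeps a `V`-free poset `V`-free and, as long as the height stays at most
`ao`, does not change `ao`; so `Λ(a, h) + 1 ≤ Λ(a, h + 1)` for `h < a`.

Conversely, let `P` be `V`-free of height `g + 1` with `ao P ≤ 2g`. In a `V`-free poset the
down-set of a maximal element is incomparable to its complement, so two tallest chains with
different tops would form a chain union of size `2g + 2`. Hence all tallest chains share their
top `r`, and `P - r` has height `g`. Removing `r` lowers `ao` by at most one; if it does, putting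
`r` back as an isolated point restores `ao` without raising the height above `g`. Thus
`Λ(a, g + 1) ≤ Λ(a, g) + 1` when `a ≤ 2g`, and both inequalities iterate between `h` and `a`.
-/

section Basic

variable {α : Type*} [PartialOrder α]

theorem IsChainUnion.mono {U V : Finset α} (hV : IsChainUnion V) (hUV : U ⊆ V) :
    IsChainUnion U :=
  fun x hx y hy z hz => hV x (hUV hx) y (hUV hy) z (hUV hz)

theorem IsChain.isChainUnion {C : Finset α} (hC : IsChain (· ≤ ·) (C : Set α)) :
    IsChainUnion C := by
  intro x hx _ _ z hz _ _
  obtain rfl | hxz := eq_or_ne x z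
  · exact Or.inl le_rfl
  · exact hC hx hz hxz

theorem IsChainUnion.isChain_of_mem {U : Finset α} {t : α} (hU : IsChainUnion U) (ht : t ∈ U)
    (htU : ∀ x ∈ U, x ≤ t) : IsChain (· ≤ ·) (U : Set α) :=
  fun x hx y hy _ => hU x hx t ht y hy (Or.inl (htU x hx)) (Or.inr (htU y hy))

theorem IsAntichain.isChainUnion {U : Finset α} (hU : IsAntichain (· ≤ ·) (U : Set α)) :
    IsChainUnion U := by
  intro x hx y hy z hz hxy hyz
  obtain rfl : x = y := hxy.elim (hU.eq hx hy) fun h => (hU.eq hy hx h).symm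
  exact hyz

theorem IsChainUnion.union [DecidableEq α] {U V : Finset α} (hU : IsChainUnion U)
    (hV : IsChainUnion V) (hUV : ∀ x ∈ U, ∀ y ∈ V, ¬(x ≤ y ∨ y ≤ x)) :
    IsChainUnion (U ∪ V) := by
  have sameSide : ∀ x ∈ U ∪ V, ∀ y ∈ U ∪ V, (x ≤ y ∨ y ≤ x) →
      (x ∈ U ∧ y ∈ U) ∨ (x ∈ V ∧ y ∈ V) := by
    intro x hx y hy hxy
    rcases Finset.mem_union.1 hx with hx | hx <;> rcases Finset.mem_union.1 hy with hy | hy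
    · exact Or.inl ⟨hx, hy⟩
    · exact absurd hxy (hUV x hx y hy)
    · exact absurd hxy.symm (hUV y hy x hx)
    · exact Or.inr ⟨hx, hy⟩
  intro x hx y hy z hz hxy hyz
  rcases sameSide x hx y hy hxy with ⟨hxU, hyU⟩ | ⟨hxV, hyV⟩ <;>
    rcases sameSide y hy z hz hyz with ⟨hyU', hzU⟩ | ⟨hyV', hzV⟩
  · exact hU x hxU y hyU z hzU hxy hyz
  · exact absurd (Or.inl le_rfl) (hUV y hyU y hyV')
  · exact absurd (Or.inl le_rfl) (hUV y hyU' y hyV)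
  · exact hV x hxV y hyV z hzV hxy hyz

theorem card_union_of_incomparable [DecidableEq α] {U V : Finset α}
    (hUV : ∀ x ∈ U, ∀ y ∈ V, ¬(x ≤ y ∨ y ≤ x)) : (U ∪ V).card = U.card + V.card :=
  Finset.card_union_of_disjoint <| Finset.disjoint_left.2 fun x hx hx' =>
    hUV x hx x hx' (Or.inl le_rfl)

theorem IsChainUnion.map {β : Type*} [PartialOrder β] (f : α ↪o β) {U : Finset α}
    (hU : IsChainUnion U) : IsChainUnion (U.map f.toEmbedding) := by
  simpa only [IsChainUnion, Finset.forall_mem_map, RelEmbedding.coe_toEmbedding, f.le_iff_le]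
    using hU

theorem IsChainUnion.preimage {β : Type*} [PartialOrder β] (f : α ↪o β) {U : Finset β}
    (hU : IsChainUnion U) : IsChainUnion (U.preimage f f.injective.injOn) :=
  fun x hx y hy z hz => by
    simpa only [f.le_iff_le] using hU _ (Finset.mem_preimage.1 hx) _ (Finset.mem_preimage.1 hy) _
      (Finset.mem_preimage.1 hz)

end Basic

theorem bddAbove_setOf_card {α : Type*} [Fintype α] (P : Finset α → Prop) :
    BddAbove {m | ∃ U : Finset α, P U ∧ U.card = m} :=
  ⟨Fintype.card α, by rintro _ ⟨U, -, rfl⟩; exact U.card_le_univ⟩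

theorem exists_card_eq_sSup {α : Type*} [Fintype α] {P : Finset α → Prop} (h : P ∅) :
    ∃ U : Finset α, P U ∧ U.card = sSup {m | ∃ U : Finset α, P U ∧ U.card = m} :=
  Nat.sSup_mem (s := {m | ∃ U : Finset α, P U ∧ U.card = m}) ⟨0, ∅, h, rfl⟩
    (bddAbove_setOf_card P)

section Fintype

variable {α β : Type*} [Fintype α] [PartialOrder α] [PartialOrder β]

theorem card_le_ao {U : Finset α} (hU : IsChainUnion U) : U.card ≤ ao α :=
  le_csSup (bddAbove_setOf_card _) ⟨U, hU, rfl⟩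

theorem exists_isChainUnion_card_eq_ao : ∃ U : Finset α, IsChainUnion U ∧ U.card = ao α :=
  exists_card_eq_sSup fun x hx => absurd hx (Finset.notMem_empty x)

theorem card_le_heightP {C : Finset α} (hC : IsChain (· ≤ ·) (C : Set α)) :
    C.card ≤ heightP α :=
  le_csSup (bddAbove_setOf_card _) ⟨C, hC, rfl⟩

theorem exists_isChain_card_eq_heightP :
    ∃ C : Finset α, IsChain (· ≤ ·) (C : Set α) ∧ C.card = heightP α :=
  exists_card_eq_sSup (by simp)

theorem heightP_le_ao : heightP α ≤ ao α := by
  obtain ⟨C, hC, hCcard⟩ := exists_isChain_card_eq_heightP (α := α)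
  exact hCcard ▸ card_le_ao hC.isChainUnion

theorem ao_le_of_orderEmbedding [Fintype β] (f : α ↪o β) : ao α ≤ ao β := by
  obtain ⟨U, hU, hUcard⟩ := exists_isChainUnion_card_eq_ao (α := α)
  simpa [hUcard] using card_le_ao (hU.map f)

theorem heightP_le_of_orderEmbedding [Fintype β] (f : α ↪o β) : heightP α ≤ heightP β := by
  obtain ⟨C, hC, hCcard⟩ := exists_isChain_card_eq_heightP (α := α)
  have hfC : IsChain (· ≤ ·) ((C.map f.toEmbedding : Finset β) : Set β) := by
    simpa using hC.image f
  simpa [hCcard] using card_le_heightP hfC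

theorem OrderIso.ao_eq [Fintype β] (f : α ≃o β) : ao α = ao β :=
  (ao_le_of_orderEmbedding f.toOrderEmbedding).antisymm
    (ao_le_of_orderEmbedding f.symm.toOrderEmbedding)

theorem OrderIso.heightP_eq [Fintype β] (f : α ≃o β) : heightP α = heightP β :=
  (heightP_le_of_orderEmbedding f.toOrderEmbedding).antisymm
    (heightP_le_of_orderEmbedding f.symm.toOrderEmbedding)

theorem card_le_ao_of_subset_range (f : α ↪o β) {U : Finset β} (hU : IsChainUnion U)
    (hUf : ∀ x ∈ U, x ∈ Set.range f) : U.card ≤ ao α := by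
  classical
  have := card_le_ao (hU.preimage f)
  rwa [Finset.card_preimage, Finset.filter_true_of_mem hUf] at this

theorem card_le_heightP_of_subset_range (f : α ↪o β) {C : Finset β}
    (hC : IsChain (· ≤ ·) (C : Set β)) (hCf : ∀ x ∈ C, x ∈ Set.range f) :
    C.card ≤ heightP α := by
  classical
  have hfC : IsChain (· ≤ ·) ((C.preimage f f.injective.injOn : Finset α) : Set α) := by
    simpa using hC.preimage_embedding f
  have := card_le_heightP hfC
  rwa [Finset.card_preimage, Finset.filter_true_of_mem hCf] at this

end Fintype

section VFree

variable {α β : Type*} [PartialOrder α] [PartialOrder β]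

theorem VFree.of_orderEmbedding (f : α ↪o β) (h : VFree β) : VFree α := by
  rintro ⟨x, y, z, hxy, hxz, hyz⟩
  exact h ⟨f x, f y, f z, f.lt_iff_lt.2 hxy, f.lt_iff_lt.2 hxz, by simpa using hyz⟩

theorem OrderIso.vFree_iff (f : α ≃o β) : VFree α ↔ VFree β :=
  ⟨VFree.of_orderEmbedding f.symm.toOrderEmbedding, VFree.of_orderEmbedding f.toOrderEmbedding⟩

theorem VFree.withTop (h : VFree α) : VFree (WithTop α) := by
  rintro ⟨x, y, z, hxy, hxz, hyz⟩
  lift y to α using fun hy => hyz (Or.inr (hy ▸ le_top))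
  lift z to α using fun hz => hyz (Or.inl (hz ▸ le_top))
  lift x to α using hxy.ne_top
  exact h ⟨x, y, z, WithTop.coe_lt_coe.1 hxy, WithTop.coe_lt_coe.1 hxz, by simpa using hyz⟩

theorem VFree.sum (hα : VFree α) (hβ : VFree β) : VFree (α ⊕ β) := by
  rintro ⟨x | x, y | y, z | z, hxy, hxz, hyz⟩ <;>
    simp only [Sum.inl_lt_inl_iff, Sum.inr_lt_inr_iff, Sum.not_inl_lt_inr, Sum.not_inr_lt_inl,
      Sum.inl_le_inl_iff, Sum.inr_le_inr_iff] at hxy hxz hyz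
  exacts [hα ⟨x, y, z, hxy, hxz, hyz⟩, hβ ⟨x, y, z, hxy, hxz, hyz⟩]

theorem VFree.of_forall_le_imp_eq (h : ∀ x y : α, x ≤ y → x = y) : VFree α :=
  fun ⟨x, y, _, hxy, _⟩ => hxy.ne (h x y hxy.le)

end VFree

section Constructions

variable {α : Type*} [Fintype α] [PartialOrder α]

theorem ao_le_ao_ne_add_one [DecidableEq α] (r : α) : ao α ≤ ao {x // x ≠ r} + 1 := by
  obtain ⟨U, hU, hUcard⟩ := exists_isChainUnion_card_eq_ao (α := α)
  have hU' := card_le_ao_of_subset_range (OrderEmbedding.subtype (· ≠ r))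
    (hU.mono (U.erase_subset r)) fun x hx => ⟨⟨x, Finset.ne_of_mem_erase hx⟩, rfl⟩
  have := U.pred_card_le_card_erase (a := r)
  omega

theorem heightP_withTop_le : heightP (WithTop α) ≤ heightP α + 1 := by
  classical
  obtain ⟨C, hC, hCcard⟩ := exists_isChain_card_eq_heightP (α := WithTop α)
  have hC' := card_le_heightP_of_subset_range (WithTop.coeOrderHom (α := α))
    (hC.mono (Finset.coe_subset.2 (C.erase_subset ⊤)))
    fun x hx => WithTop.ne_top_iff_exists.1 (Finset.ne_of_mem_erase hx)
  have := C.pred_card_le_card_erase (a := ⊤)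
  omega

theorem ao_withTop (h : heightP α < ao α) : ao (WithTop α) = ao α := by
  refine le_antisymm ?_ (ao_le_of_orderEmbedding (WithTop.coeOrderHom (α := α)))
  obtain ⟨U, hU, hUcard⟩ := exists_isChainUnion_card_eq_ao (α := WithTop α)
  rw [← hUcard]
  by_cases htop : ⊤ ∈ U
  · have := card_le_heightP (hU.isChain_of_mem htop fun x _ => le_top)
    have := heightP_withTop_le (α := α)
    omega
  · exact card_le_ao_of_subset_range (WithTop.coeOrderHom (α := α)) hU fun x hx =>
      WithTop.ne_top_iff_exists.1 (ne_of_mem_of_not_mem hx htop)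

end Constructions

section Sum

variable {α β : Type*} [Fintype α] [PartialOrder α] [Fintype β] [PartialOrder β]

def OrderEmbedding.sumInl : α ↪o α ⊕ β :=
  OrderEmbedding.ofMapLEIff Sum.inl fun _ _ => Sum.inl_le_inl_iff

def OrderEmbedding.sumInr : β ↪o α ⊕ β :=
  OrderEmbedding.ofMapLEIff Sum.inr fun _ _ => Sum.inr_le_inr_iff

theorem heightP_sum_le : heightP (α ⊕ β) ≤ max (heightP α) (heightP β) := by
  obtain ⟨C, hC, hCcard⟩ := exists_isChain_card_eq_heightP (α := α ⊕ β)
  rw [← hCcard]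
  by_cases hl : ∃ a, Sum.inl a ∈ C
  · obtain ⟨a, ha⟩ := hl
    refine (card_le_heightP_of_subset_range OrderEmbedding.sumInl hC ?_).trans (le_max_left _ _)
    rintro (b | b) hb
    · exact ⟨b, rfl⟩
    · simpa using hC ha hb Sum.inl_ne_inr
  · refine (card_le_heightP_of_subset_range OrderEmbedding.sumInr hC ?_).trans (le_max_right _ _)
    rintro (b | b) hb
    · exact absurd ⟨b, hb⟩ hl
    · exact ⟨b, rfl⟩

theorem ao_sum : ao (α ⊕ β) = ao α + ao β := by
  classical
  apply le_antisymm
  · obtain ⟨U, hU, hUcard⟩ := exists_isChainUnion_card_eq_ao (α := α ⊕ β)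
    rw [← hUcard, ← U.card_filter_add_card_filter_not (fun x => x.isLeft)]
    gcongr
    · refine card_le_ao_of_subset_range OrderEmbedding.sumInl (hU.mono (U.filter_subset _)) ?_
      rintro (b | b) hb
      · exact ⟨b, rfl⟩
      · simp at hb
    · refine card_le_ao_of_subset_range OrderEmbedding.sumInr (hU.mono (U.filter_subset _)) ?_
      rintro (b | b) hb
      · simp at hb
      · exact ⟨b, rfl⟩
  · obtain ⟨U, hU, hUcard⟩ := exists_isChainUnion_card_eq_ao (α := α)
    obtain ⟨V, hV, hVcard⟩ := exists_isChainUnion_card_eq_ao (α := β)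
    have hinc : ∀ x ∈ U.map OrderEmbedding.sumInl.toEmbedding,
        ∀ y ∈ V.map OrderEmbedding.sumInr.toEmbedding, ¬(x ≤ y ∨ y ≤ x) := by
      simp [OrderEmbedding.sumInl, OrderEmbedding.sumInr]
    have := card_le_ao ((hU.map (OrderEmbedding.sumInl (β := β))).union
      (hV.map (OrderEmbedding.sumInr (α := α))) hinc)
    rwa [card_union_of_incomparable hinc, Finset.card_map, Finset.card_map, hUcard, hVcard]
      at this

end Sum

section Antichain

variable {α : Type*} [Fintype α] [PartialOrder α]

theorem ao_eq_card_of_forall_le_imp_eq (h : ∀ x y : α, x ≤ y → x = y) :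
    ao α = Fintype.card α := by
  refine le_antisymm ?_ (card_le_ao (U := Finset.univ) <| IsAntichain.isChainUnion
    fun x _ y _ hne hxy => hne (h x y hxy))
  obtain ⟨U, -, hUcard⟩ := exists_isChainUnion_card_eq_ao (α := α)
  exact hUcard ▸ U.card_le_univ

theorem heightP_le_one_of_forall_le_imp_eq (h : ∀ x y : α, x ≤ y → x = y) :
    heightP α ≤ 1 := by
  obtain ⟨C, hC, hCcard⟩ := exists_isChain_card_eq_heightP (α := α)
  refine hCcard ▸ Finset.card_le_one.2 fun x hx y hy => ?_
  by_contra hxy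
  exact (hC hx hy hxy).elim (fun h' => hxy (h x y h')) fun h' => hxy (h y x h').symm

theorem Sigma.le_imp_eq_of_unit {ι : Type*} (x y : Σ _ : ι, Unit) (hxy : x ≤ y) : x = y := by
  obtain ⟨i, ⟨⟩⟩ := x
  obtain ⟨j, ⟨⟩⟩ := y
  obtain rfl : i = j := (Sigma.le_def.1 hxy).1
  rfl

end Antichain

section Mirsky

variable {α : Type*} [Fintype α] [PartialOrder α]

theorem LTSeries.length_lt_heightP (p : LTSeries α) : p.length < heightP α := by
  classical
  have hC : IsChain (· ≤ ·) ((Finset.univ.image p : Finset α) : Set α) := by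
    simpa using p.strictMono.monotone.isChain_range
  have := card_le_heightP hC
  rw [Finset.card_image_of_injective _ p.strictMono.injective, Finset.card_univ,
    Fintype.card_fin] at this
  omega

theorem height_lt_heightP (x : α) : Order.height x < heightP α := by
  by_contra! h
  obtain ⟨p, -, hp⟩ := Order.exists_series_of_le_height x h
  exact (p.length_lt_heightP).ne hp

-- Mirsky's argument: the level sets of `Order.height` are antichains.
theorem card_le_heightP_mul_ao : Fintype.card α ≤ heightP α * ao α := by
  classical
  set level : α → ℕ := fun x => (Order.height x).toNat
  have hlevel : ∀ x, (level x : ℕ∞) = Order.height x := fun x =>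
    ENat.natCast_toNat (height_lt_heightP x).ne_top
  have hlevel_lt : ∀ x, level x < heightP α := fun x =>
    Nat.cast_lt.1 ((hlevel x).trans_lt (height_lt_heightP x))
  have hlevel_strictMono : StrictMono level := fun x y hxy => Nat.cast_lt.1 <| by
    rw [hlevel, hlevel]
    exact Order.height_strictMono hxy (hlevel x ▸ ENat.natCast_lt_top _)
  have hfiber : ∀ n, ({x | level x = n} : Finset α).card ≤ ao α := fun n =>
    card_le_ao <| IsAntichain.isChainUnion fun x hx y hy hne hxy => by
      simp only [Finset.coe_filter, Finset.mem_univ, true_and, Set.mem_ofPred_eq] at hx hy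
      exact (hlevel_strictMono (hxy.lt_of_ne hne)).ne (hx.trans hy.symm)
  calc Fintype.card α ≤ ao α * (Finset.range (heightP α)).card :=
        Finset.card_le_mul_card_image_of_maps_to
          (fun x _ => Finset.mem_range.2 (hlevel_lt x)) _ fun n _ => hfiber n
    _ = heightP α * ao α := by rw [Finset.card_range, mul_comm]

end Mirsky

section TallestChains

variable {α : Type*} [PartialOrder α]

theorem IsChain.exists_isGreatest {C : Finset α} (hC : IsChain (· ≤ ·) (C : Set α))
    (hne : C.Nonempty) : ∃ r, IsGreatest (C : Set α) r := by
  obtain ⟨r, hr⟩ := C.exists_maximal hne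
  refine ⟨r, hr.prop, fun x hx => ?_⟩
  obtain rfl | hxr := eq_or_ne x r
  · exact le_rfl
  · exact (hC hx hr.prop hxr).elim id (hr.le_of_ge hx)

theorem IsChain.insert_of_mem_upperBounds {C : Finset α} {r y : α} [DecidableEq α]
    (hC : IsChain (· ≤ ·) (C : Set α)) (hr : r ∈ upperBounds (C : Set α)) (hry : r ≤ y) :
    IsChain (· ≤ ·) ((insert y C : Finset α) : Set α) := by
  rw [Finset.coe_insert]
  exact hC.insert fun x hx _ => Or.inr ((hr hx).trans hry)

theorem VFree.le_total_of_le (hv : VFree α) {x y z : α} (hxy : x ≤ y) (hxz : x ≤ z) :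
    y ≤ z ∨ z ≤ y := by
  obtain rfl | hxy := hxy.eq_or_lt
  · exact Or.inl hxz
  obtain rfl | hxz := hxz.eq_or_lt
  · exact Or.inr hxy.le
  by_contra h
  exact hv ⟨x, y, z, hxy, hxz, h⟩

theorem VFree.le_of_comparable (hv : VFree α) {r x y : α} (hr : IsMax r) (hx : x ≤ r)
    (hxy : x ≤ y ∨ y ≤ x) : y ≤ r := by
  rcases hxy with hxy | hyx
  · exact (hv.le_total_of_le hxy hx).elim id fun hry => (hr.eq_of_ge hry).le
  · exact hyx.trans hx

variable [Fintype α] [DecidableEq α]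

theorem isMax_of_isGreatest_of_card_eq_heightP {C : Finset α} {r : α}
    (hC : IsChain (· ≤ ·) (C : Set α)) (hCcard : C.card = heightP α)
    (hr : IsGreatest (C : Set α) r) : IsMax r := by
  intro y hry
  by_contra hyr
  have hyC : y ∉ C := fun hy => hyr (hr.2 hy)
  have := card_le_heightP (hC.insert_of_mem_upperBounds hr.2 hry)
  rw [Finset.card_insert_of_notMem hyC] at this
  omega

theorem VFree.card_lt_heightP_of_notMem (hv : VFree α) (hao : ao α < 2 * heightP α)
    {C : Finset α} {r : α} (hC : IsChain (· ≤ ·) (C : Set α)) (hCcard : C.card = heightP α)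
    (hr : IsGreatest (C : Set α) r) {D : Finset α} (hD : IsChain (· ≤ ·) (D : Set α))
    (hrD : r ∉ D) : D.card < heightP α := by
  have hrmax := isMax_of_isGreatest_of_card_eq_heightP hC hCcard hr
  by_contra! hDcard
  by_cases hDr : ∃ x ∈ D, x ≤ r
  · obtain ⟨x, hxD, hxr⟩ := hDr
    have hrD_ub : r ∈ upperBounds (D : Set α) := fun y hy => by
      obtain rfl | hxy := eq_or_ne x y
      · exact hxr
      · exact hv.le_of_comparable hrmax hxr (hD hxD hy hxy)
    have := card_le_heightP (hD.insert_of_mem_upperBounds hrD_ub le_rfl)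
    rw [Finset.card_insert_of_notMem hrD] at this
    omega
  · have hinc : ∀ x ∈ C, ∀ y ∈ D, ¬(x ≤ y ∨ y ≤ x) := fun x hx y hy hxy =>
      hDr ⟨y, hy, hv.le_of_comparable hrmax (hr.2 hx) hxy⟩
    have := card_le_ao (hC.isChainUnion.union hD.isChainUnion hinc)
    rw [card_union_of_incomparable hinc] at this
    omega

theorem VFree.exists_heightP_ne_lt (hv : VFree α) (hao : ao α < 2 * heightP α) :
    ∃ r : α, heightP {x // x ≠ r} < heightP α := by
  obtain ⟨C, hC, hCcard⟩ := exists_isChain_card_eq_heightP (α := α)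
  obtain ⟨r, hr⟩ := hC.exists_isGreatest (Finset.card_pos.1 (by omega))
  refine ⟨r, ?_⟩
  obtain ⟨D, hD, hDcard⟩ := exists_isChain_card_eq_heightP (α := {x // x ≠ r})
  rw [← hDcard, ← D.card_map (Function.Embedding.subtype _)]
  refine hv.card_lt_heightP_of_notMem hao hC hCcard hr ?_ (by simp)
  simpa using hD.image (OrderEmbedding.subtype (· ≠ r))

end TallestChains

section Lam

theorem bddAbove_setOf_Lam (a h : ℕ) :
    BddAbove {n | ∃ P : PartialOrder (Fin n), @VFree (Fin n) P ∧
      @ao (Fin n) (Fin.fintype n) P = a ∧ @heightP (Fin n) (Fin.fintype n) P ≤ h} := by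
  refine ⟨a * a, fun n ⟨P, _, hao, _⟩ => ?_⟩
  have hcard := @card_le_heightP_mul_ao (Fin n) _ P
  have hheight := @heightP_le_ao (Fin n) _ P
  rw [Fintype.card_fin, hao] at hcard
  rw [hao] at hheight
  exact hcard.trans (Nat.mul_le_mul_right a hheight)

theorem Lam_le {a h m : ℕ}
    (H : ∀ (α : Type) [Fintype α] [PartialOrder α],
      VFree α → ao α = a → heightP α ≤ h → Fintype.card α ≤ m) :
    Lam a h ≤ m :=
  csSup_le' fun n ⟨P, hv, hao, hht⟩ => by simpa using @H (Fin n) _ P hv hao hht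

theorem card_le_Lam {α : Type*} [Fintype α] [PartialOrder α] {h : ℕ} (hv : VFree α)
    (hh : heightP α ≤ h) : Fintype.card α ≤ Lam (ao α) h := by
  let e : Fin (Fintype.card α) ≃ α := (Fintype.equivFin α).symm
  let P : PartialOrder (Fin (Fintype.card α)) := e.partialOrder
  let f : @OrderIso _ α P.toLE _ := ⟨e, Iff.rfl⟩
  refine le_csSup (bddAbove_setOf_Lam _ _) ⟨P, ?_, ?_, ?_⟩
  · exact (@OrderIso.vFree_iff _ _ P _ f).2 hv
  · exact @OrderIso.ao_eq _ _ _ P _ _ f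
  · exact (@OrderIso.heightP_eq _ _ _ P _ _ f).trans_le hh

theorem le_Lam {h : ℕ} (n : ℕ) (hh : 1 ≤ h) : n ≤ Lam n h := by
  have hle : ∀ x y : Σ _ : Fin n, Unit, x ≤ y → x = y := Sigma.le_imp_eq_of_unit
  have := card_le_Lam (VFree.of_forall_le_imp_eq hle)
    ((heightP_le_one_of_forall_le_imp_eq hle).trans hh)
  simpa [ao_eq_card_of_forall_le_imp_eq hle] using this

theorem Lam_add_one_le {a h : ℕ} (hha : h < a) : Lam a h + 1 ≤ Lam a (h + 1) := by
  have hpos : a ≤ Lam a (h + 1) := le_Lam a (Nat.le_add_left 1 h)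
  suffices Lam a h ≤ Lam a (h + 1) - 1 by omega
  refine Lam_le fun α _ _ hv hao hht => ?_
  have := card_le_Lam hv.withTop (heightP_withTop_le.trans (Nat.add_le_add_right hht 1))
  have hcard : Fintype.card (WithTop α) = Fintype.card α + 1 := Fintype.card_option
  rw [ao_withTop (by omega), hao, hcard] at this
  omega

theorem Lam_succ_le {a g : ℕ} (hag : a ≤ 2 * g) : Lam a (g + 1) ≤ Lam a g + 1 := by
  classical
  refine Lam_le fun α _ _ hv hao hht => ?_
  obtain hht | hht : heightP α ≤ g ∨ heightP α = g + 1 := by omega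
  · exact (hao ▸ card_le_Lam hv hht).trans (Nat.le_succ _)
  obtain ⟨r, hr⟩ := hv.exists_heightP_ne_lt (by omega)
  have hht' : heightP {x // x ≠ r} ≤ g := by omega
  have hv' : VFree {x // x ≠ r} := hv.of_orderEmbedding (OrderEmbedding.subtype _)
  have hcard : Fintype.card {x // x ≠ r} + 1 = Fintype.card α := by
    have := Fintype.card_pos_iff.2 ⟨r⟩
    rw [Fintype.card_subtype_compl, Fintype.card_subtype_eq]
    omega
  have hao_le : ao {x // x ≠ r} ≤ a :=
    hao ▸ ao_le_of_orderEmbedding (OrderEmbedding.subtype _)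
  have hao_ge : a ≤ ao {x // x ≠ r} + 1 := hao ▸ ao_le_ao_ne_add_one r
  obtain hao' | hao' : ao {x // x ≠ r} = a ∨ ao {x // x ≠ r} + 1 = a := by omega
  · have := card_le_Lam hv' hht'
    rw [hao'] at this
    omega
  · have hUnit : ∀ x y : Unit, x ≤ y → x = y := fun x y _ => Subsingleton.elim x y
    have := card_le_Lam (hv'.sum (VFree.of_forall_le_imp_eq hUnit)) <|
      heightP_sum_le.trans (max_le hht'
        ((heightP_le_one_of_forall_le_imp_eq hUnit).trans (by omega)))
    rw [ao_sum, ao_eq_card_of_forall_le_imp_eq hUnit, Fintype.card_sum, Fintype.card_unit,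
      hao'] at this
    omega

theorem Lam_add_le_Lam_add {a h k : ℕ} (hk : h + k ≤ a) : Lam a h + k ≤ Lam a (h + k) := by
  induction k with
  | zero => rfl
  | succ k ih =>
    have := Lam_add_one_le (a := a) (h := h + k) (by omega)
    rw [← add_assoc h k 1]
    have := ih (by omega)
    omega

theorem Lam_add_le {a h k : ℕ} (hah : a ≤ 2 * h) : Lam a (h + k) ≤ Lam a h + k := by
  induction k with
  | zero => rfl
  | succ k ih =>
    have := Lam_succ_le (a := a) (g := h + k) (by omega)
    rw [← add_assoc h k 1]
    omega

end Lam

theorem Lam_le_Lambda_sub_general (a h : ℕ) (hh : h ≤ a) :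
    Lam a h ≤ Lambda a - (a - h) ∧ (a ≤ 2 * h → Lam a h = Lambda a - (a - h)) := by
  have hsum : h + (a - h) = a := Nat.add_sub_cancel' hh
  have hup : Lam a h + (a - h) ≤ Lambda a := by
    simpa only [Lambda, hsum] using Lam_add_le_Lam_add (a := a) hsum.le
  refine ⟨by omega, fun hah => ?_⟩
  have hdown : Lambda a ≤ Lam a h + (a - h) := by
    simpa only [Lambda, hsum] using Lam_add_le (k := a - h) hah
  omega

/-- for `a ≥ 2` and `0 ≤ h ≤ a`, `Λ(a,h) ≤ Λ(a) − (a−h)`, with equality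
when `a/2 ≤ h ≤ a`. -/
theorem Lam_le_Lambda_sub (a h : ℕ) (ha : 2 ≤ a) (hh : h ≤ a) :
    Lam a h ≤ Lambda a - (a - h) ∧ (a ≤ 2 * h → Lam a h = Lambda a - (a - h)) :=
  Lam_le_Lambda_sub_general a h hh
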